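/- Let s : ℝ → M_n(ℂ) be a differentiable matrix-valued function. Then the function t ↦ exp(s(t)) is differentiable, and for every t ∈ ℝ one has Tr( exp(−s(t)) · (d/dt exp(s(t))) · s(t) ) = Tr( s(t) · s'(t) ). -/

import Mathlib

/-!
Let `τ` satisfy `τ (p * q) = τ (q * p)` and let `B` commute with `x`. Differentiating
`exp ((a + b) • y) = exp (a • y) * exp (b • y)` at `y = x` in the direction `v` and cycling under
`τ` shows that `a ↦ a • h a` is additive, where `h a = τ (exp' (a • x) v * exp (-a • x) * B)`;
being continuous, it is linear. Hence `h` is constant on `a ≠ 0`, and by continuity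
`h 1 = h 0 = τ (v * B)`. The theorem is the case `τ = trace`, `B = s t`.
-/

open NormedSpace

section ExpDerivative

variable {𝔸 : Type*} [NormedRing 𝔸] [NormedAlgebra ℝ 𝔸] [CompleteSpace 𝔸]

theorem exp_smul_mul_exp_smul (x : 𝔸) (a b : ℝ) :
    exp (a • x) * exp (b • x) = exp ((a + b) • x) := by
  rw [add_smul, exp_add_of_commute_of_mem_ball (𝕂 := ℝ)
    ((Commute.refl x).smul_left a |>.smul_right b)] <;>
  simp [expSeries_radius_eq_top]

theorem contDiff_exp {n : WithTop ℕ∞} : ContDiff ℝ n (exp : 𝔸 → 𝔸) :=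
  AnalyticOnNhd.contDiff fun x _ => exp_analytic x

theorem hasDerivAt_exp_comp {s : ℝ → 𝔸} {s' : 𝔸} {t : ℝ} (hs : HasDerivAt s s' t) :
    HasDerivAt (fun u => exp (s u)) (fderiv ℝ exp (s t) s') t :=
  (exp_analytic (𝕂 := ℝ) (s t)).differentiableAt.hasFDerivAt.comp_hasDerivAt t hs

theorem hasFDerivAt_exp_smul (x : 𝔸) (a : ℝ) :
    HasFDerivAt (fun y : 𝔸 => exp (a • y)) (a • fderiv ℝ exp (a • x)) x := by
  have hexp : HasFDerivAt exp (fderiv ℝ exp (a • x)) (a • x) :=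
    (exp_analytic (𝕂 := ℝ) (a • x)).differentiableAt.hasFDerivAt
  refine (hexp.comp x ((hasFDerivAt_id x).const_smul a)).congr_fderiv ?_
  ext v
  simp

theorem smul_fderiv_exp_smul_add (x v : 𝔸) (a b : ℝ) :
    (a + b) • fderiv ℝ exp ((a + b) • x) v =
      b • (exp (a • x) * fderiv ℝ exp (b • x) v) + a • (fderiv ℝ exp (a • x) v * exp (b • x)) := by
  have hprod := (hasFDerivAt_exp_smul x a).mul' (hasFDerivAt_exp_smul x b)
  have hsum : (fun y : 𝔸 => exp (a • y)) * (fun y => exp (b • y)) = fun y => exp ((a + b) • y) :=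
    funext fun y => exp_smul_mul_exp_smul y a b
  rw [hsum] at hprod
  have := congrArg (· v) ((hasFDerivAt_exp_smul x (a + b)).unique hprod)
  simpa [add_comm] using this

variable {E : Type*} [NormedAddCommGroup E] [NormedSpace ℝ E]

theorem smul_map_fderiv_exp_smul_add (τ : 𝔸 →L[ℝ] E) (hτ : ∀ a b, τ (a * b) = τ (b * a))
    {x B : 𝔸} (hB : Commute x B) (v : 𝔸) (a b : ℝ) :
    (a + b) • τ (fderiv ℝ exp ((a + b) • x) v * exp ((-(a + b)) • x) * B) =
      a • τ (fderiv ℝ exp (a • x) v * exp ((-a) • x) * B) +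
        b • τ (fderiv ℝ exp (b • x) v * exp ((-b) • x) * B) := by
  have hexp_a : exp ((-(a + b)) • x) * exp (a • x) = exp ((-b) • x) := by
    rw [exp_smul_mul_exp_smul]; congr 2; ring
  have hexp_b : exp (b • x) * exp ((-(a + b)) • x) = exp ((-a) • x) := by
    rw [exp_smul_mul_exp_smul]; congr 2; ring
  have hBa : B * exp (a • x) = exp (a • x) * B := (hB.symm.smul_right a).exp_right.eq
  have hfirst : τ (exp (a • x) * fderiv ℝ exp (b • x) v * exp ((-(a + b)) • x) * B) =
      τ (fderiv ℝ exp (b • x) v * exp ((-b) • x) * B) := by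
    rw [mul_assoc, mul_assoc, hτ, mul_assoc, mul_assoc, hBa, ← mul_assoc (exp _), hexp_a,
      ← mul_assoc]
  have hsecond : τ (fderiv ℝ exp (a • x) v * exp (b • x) * exp ((-(a + b)) • x) * B) =
      τ (fderiv ℝ exp (a • x) v * exp ((-a) • x) * B) := by
    rw [mul_assoc _ (exp (b • x)), hexp_b]
  rw [← map_smul, ← smul_mul_assoc, ← smul_mul_assoc, smul_fderiv_exp_smul_add, add_mul, add_mul,
    map_add, smul_mul_assoc, smul_mul_assoc, smul_mul_assoc, smul_mul_assoc, map_smul, map_smul,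
    hfirst, hsecond, add_comm]

theorem map_fderiv_exp_mul_exp_neg_mul (τ : 𝔸 →L[ℝ] E) (hτ : ∀ a b, τ (a * b) = τ (b * a))
    {x B : 𝔸} (hB : Commute x B) (v : 𝔸) :
    τ (fderiv ℝ exp x v * exp (-x) * B) = τ (v * B) := by
  set h : ℝ → E := fun a => τ (fderiv ℝ exp (a • x) v * exp ((-a) • x) * B) with h_def
  have hcont : Continuous h := by
    refine τ.continuous.comp (Continuous.mul (Continuous.mul ?_ ?_) continuous_const)
    · exact ((contDiff_exp (n := 1)).continuous_fderiv one_ne_zero).comp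
        (continuous_id.smul continuous_const) |>.clm_apply continuous_const
    · exact (contDiff_exp (n := 0)).continuous.comp (continuous_neg.smul continuous_const)
  let g : ℝ →+ E := AddMonoidHom.mk' (fun a => a • h a) (smul_map_fderiv_exp_smul_add τ hτ hB v)
  have hg : ∀ a, a • h a = a • h 1 := fun a => by
    simpa [g] using map_real_smul g (continuous_id.smul hcont) a 1
  have hconst : h = fun _ => h 1 :=
    Continuous.ext_on (dense_compl_singleton 0) hcont continuous_const fun a ha =>
      smul_right_injective E ha (hg a)
  have h0 := congrFun hconst 0
  simp only [h_def, zero_smul, neg_zero, NormedSpace.exp_zero, mul_one, one_smul, neg_one_smul,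
    (hasFDerivAt_exp_zero (𝕂 := ℝ)).fderiv, one_apply_eq_self] at h0
  exact h0.symm

end ExpDerivative

section MatrixDeriv

attribute [local instance] Matrix.linftyOpNormedAddCommGroup Matrix.linftyOpNormedSpace
  Matrix.linftyOpNormedRing Matrix.linftyOpNormedAlgebra

variable {m n 𝕜 : Type*} [Fintype m] [Fintype n] [RCLike 𝕜]

theorem hasDerivAt_matrix_iff {f : ℝ → Matrix m n 𝕜} {f' : Matrix m n 𝕜} {t : ℝ} :
    HasDerivAt f f' t ↔ ∀ i j, HasDerivAt (fun u => f u i j) (f' i j) t := by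
  let e : Matrix m n 𝕜 ≃L[ℝ] (m → n → 𝕜) :=
    (Matrix.ofLinearEquiv ℝ).symm.toContinuousLinearEquiv
  constructor
  · intro hf i j
    exact hasDerivAt_pi.1 (hasDerivAt_pi.1 (e.hasFDerivAt.comp_hasDerivAt t hf) i) j
  · intro hf
    exact e.symm.hasFDerivAt.comp_hasDerivAt (f := fun u => e (f u)) t
      (hasDerivAt_pi.2 fun i => hasDerivAt_pi.2 (hf i))

variable [DecidableEq m]

theorem differentiableAt_exp_apply {s : ℝ → Matrix m m 𝕜} {s' : Matrix m m 𝕜} {t : ℝ}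
    (hs : ∀ i j, HasDerivAt (fun u => s u i j) (s' i j) t) (i j : m) :
    DifferentiableAt ℝ (fun u => exp (s u) i j) t :=
  (hasDerivAt_matrix_iff.1 (hasDerivAt_exp_comp (hasDerivAt_matrix_iff.2 hs)) i j).differentiableAt

theorem trace_exp_neg_mul_mul_eq_trace_mul {s : ℝ → Matrix m m 𝕜} {s' D : Matrix m m 𝕜} {t : ℝ}
    (hs : ∀ i j, HasDerivAt (fun u => s u i j) (s' i j) t)
    (hD : ∀ i j, HasDerivAt (fun u => exp (s u) i j) (D i j) t) :
    (exp (-s t) * D * s t).trace = (s t * s').trace := by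
  have hD_eq : D = fderiv ℝ exp (s t) s' :=
    (hasDerivAt_matrix_iff.2 hD).unique (hasDerivAt_exp_comp (hasDerivAt_matrix_iff.2 hs))
  have hcomm : s t * exp (-s t) = exp (-s t) * s t := (Commute.refl _).neg_right.exp_right.eq
  calc (exp (-s t) * D * s t).trace
      = (D * exp (-s t) * s t).trace := by
        rw [mul_assoc, Matrix.trace_mul_comm, mul_assoc, hcomm, ← mul_assoc]
    _ = (s' * s t).trace := hD_eq ▸ map_fderiv_exp_mul_exp_neg_mul
        (Matrix.traceLinearMap m ℝ 𝕜).toContinuousLinearMap Matrix.trace_mul_comm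
        (Commute.refl (s t)) s'
    _ = (s t * s').trace := Matrix.trace_mul_comm _ _

end MatrixDeriv

/-- let `s : ℝ → M_n(ℂ)` be a differentiable matrix-valued function
(differentiability taken entrywise, with entrywise derivative `s'`). Then
`t ↦ exp(s(t))` is differentiable (entrywise), and for every `t` one has
`Tr( exp(-s(t)) · (d/dt exp(s(t))) · s(t) ) = Tr( s(t) · s'(t) )`. -/
theorem trace_exp_deriv_eq_trace_mul_deriv {n : ℕ}
    (s s' : ℝ → Matrix (Fin n) (Fin n) ℂ)
    (hs : ∀ (t : ℝ) (i j : Fin n), HasDerivAt (fun u : ℝ => s u i j) (s' t i j) t) :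
    (∀ i j : Fin n, Differentiable ℝ (fun t : ℝ => NormedSpace.exp (s t) i j)) ∧
    (∀ t : ℝ,
      (NormedSpace.exp (-(s t)) *
        (Matrix.of fun i j : Fin n => deriv (fun u : ℝ => NormedSpace.exp (s u) i j) t) *
        s t).trace = (s t * s' t).trace) :=
  ⟨fun i j t => differentiableAt_exp_apply (hs t) i j,
    fun t => trace_exp_neg_mul_mul_eq_trace_mul (hs t)
      fun i j => (differentiableAt_exp_apply (hs t) i j).hasDerivAt⟩
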